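/- Let q = p^m with p an odd prime and k a positive integer with gcd(k, q+1) = 1, and let F(x) = x^(k(q-1)) on F_{q^2}. Then F is locally-APN: for every b ∈ F_{q^2} \ {0, 1, -1}, the equation F(x+1) - F(x) = b has at most 2 solutions x ∈ F_{q^2}. -/

import Mathlib

/-!
Write `e = k(q-1)`. For a solution `x` neither `x` nor `x + 1` vanishes, so `v = x^e` and
`v + b = (x+1)^e` are `k`-th powers of the elements `x^(q-1)`, `(x+1)^(q-1)` of the norm-one
group `μ_{q+1}`, and hence lie in it. Expanding `(v + b)^(q+1) = 1` with Frobenius and using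
`v^(q+1) = 1` shows that `v` is a root of the quadratic `b^q X^2 + b^(q+1) X + b`. Conversely
`v` determines `x`: since `k` is prime to `q + 1`, raising to the `k`-th power is injective on
`μ_{q+1}`, so `v` and `v + b` give back `x^(q-1)` and `(x+1)^(q-1)`, and Frobenius turns
`x^q + 1 = (x+1)^q` into a linear equation for `x` in terms of these two elements.
-/

open Finset Polynomial

lemma eq_of_pow_eq_pow_of_coprime {G₀ : Type*} [CommGroupWithZero G₀] {k n : ℕ}
    (hkn : k.Coprime n) (hn : n ≠ 0) {y z : G₀} (hy : y ^ n = 1) (hz : z ^ n = 1)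
    (h : y ^ k = z ^ k) : y = z := by
  have hz0 : z ≠ 0 := by
    rintro rfl
    simp [zero_pow hn] at hz
  rw [← div_eq_one_iff_eq hz0, ← pow_eq_one_iff_of_coprime hkn, div_pow, div_pow, h, hy, hz,
    div_self (pow_ne_zero _ hz0), div_one]
  exact ⟨rfl, rfl⟩

section Ring

variable {R : Type*} [Ring R] {e : ℕ} {x b : R}

lemma ne_zero_of_add_one_pow_sub_pow_eq (hb0 : b ≠ 0) (hb1 : b ≠ 1)
    (hx : (x + 1) ^ e - x ^ e = b) : x ≠ 0 := by
  rintro rfl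
  rw [zero_add, one_pow, zero_pow_eq] at hx
  split_ifs at hx
  · exact hb0 (by rw [← hx, sub_self])
  · exact hb1 (by rw [← hx, sub_zero])

lemma add_one_ne_zero_of_add_one_pow_sub_pow_eq (hb0 : b ≠ 0) (hb1 : b ≠ 1) (hbm : b ≠ -1)
    (hx : (x + 1) ^ e - x ^ e = b) : x + 1 ≠ 0 := by
  intro h
  rw [h, eq_neg_of_add_eq_zero_left h, zero_pow_eq] at hx
  split_ifs at hx with he
  · exact hb0 (by rw [← hx, he, pow_zero, sub_self])
  · rcases neg_one_pow_eq_or R e with h1 | h1 <;> rw [h1] at hx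
    · exact hbm (by rw [← hx, zero_sub])
    · exact hb1 (by rw [← hx, zero_sub, neg_neg])

end Ring

section Field

variable {K : Type*} [Field K] {q : ℕ}

lemma quadratic_eq_zero_of_pow_succ_eq_one {v b : K} (hfrob : (v + b) ^ q = v ^ q + b ^ q)
    (hv : v ^ (q + 1) = 1) (hvb : (v + b) ^ (q + 1) = 1) :
    b ^ q * v ^ 2 + b ^ (q + 1) * v + b = 0 := by
  rw [pow_succ] at hv hvb
  rw [hfrob] at hvb
  linear_combination v * hvb - (v + b) * hv

lemma eq_div_of_add_one_pow_eq (hq : q ≠ 0) {x : K} (hfrob : (x + 1) ^ q = x ^ q + 1)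
    (hne : x ^ (q - 1) ≠ (x + 1) ^ (q - 1)) :
    x = ((x + 1) ^ (q - 1) - 1) / (x ^ (q - 1) - (x + 1) ^ (q - 1)) := by
  have hx : x * x ^ (q - 1) = x ^ q := by rw [← pow_succ', Nat.sub_add_cancel (by omega)]
  have hx1 : (x + 1) * (x + 1) ^ (q - 1) = (x + 1) ^ q := by
    rw [← pow_succ', Nat.sub_add_cancel (by omega)]
  rw [eq_div_iff (sub_ne_zero.2 hne)]
  linear_combination hx - hx1 - hfrob

variable [Fintype K]

lemma pow_sub_one_pow_add_one_eq_one (hcard : Fintype.card K = q ^ 2) {x : K} (hx : x ≠ 0) :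
    (x ^ (q - 1)) ^ (q + 1) = 1 := by
  have : (q - 1) * (q + 1) = Fintype.card K - 1 := by
    rw [hcard, mul_comm, ← Nat.pow_two_sub_pow_two q 1, one_pow]
  rw [← pow_mul, this]
  exact FiniteField.pow_card_sub_one_eq_one x hx

lemma injOn_pow_setOf_add_one_pow_sub_pow_eq (hcard : Fintype.card K = q ^ 2)
    (hfrob : ∀ u v : K, (u + v) ^ q = u ^ q + v ^ q) {k : ℕ} (hkq : k.Coprime (q + 1)) {b : K}
    (hb0 : b ≠ 0) (hb1 : b ≠ 1) (hbm : b ≠ -1) :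
    Set.InjOn (· ^ (k * (q - 1))) {x : K | (x + 1) ^ (k * (q - 1)) - x ^ (k * (q - 1)) = b} := by
  have hq : q ≠ 0 := by
    rintro rfl
    exact Fintype.card_ne_zero (by rw [hcard, zero_pow two_ne_zero])
  intro x₁ (hx₁ : _ = b) x₂ (hx₂ : _ = b) (hv : x₁ ^ _ = x₂ ^ _)
  have hnorm : ∀ x : K, (x + 1) ^ (k * (q - 1)) - x ^ (k * (q - 1)) = b →
      (x ^ (q - 1)) ^ (q + 1) = 1 ∧ ((x + 1) ^ (q - 1)) ^ (q + 1) = 1 := fun x hx =>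
    ⟨pow_sub_one_pow_add_one_eq_one hcard (ne_zero_of_add_one_pow_sub_pow_eq hb0 hb1 hx),
      pow_sub_one_pow_add_one_eq_one hcard
        (add_one_ne_zero_of_add_one_pow_sub_pow_eq hb0 hb1 hbm hx)⟩
  have hy : x₁ ^ (q - 1) = x₂ ^ (q - 1) :=
    eq_of_pow_eq_pow_of_coprime hkq (Nat.succ_ne_zero q) (hnorm x₁ hx₁).1 (hnorm x₂ hx₂).1
      (by rw [← pow_mul', ← pow_mul', hv])
  have hz : (x₁ + 1) ^ (q - 1) = (x₂ + 1) ^ (q - 1) :=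
    eq_of_pow_eq_pow_of_coprime hkq (Nat.succ_ne_zero q) (hnorm x₁ hx₁).2 (hnorm x₂ hx₂).2
      (by rw [← pow_mul', ← pow_mul', eq_add_of_sub_eq hx₁, eq_add_of_sub_eq hx₂, hv])
  have hne : x₁ ^ (q - 1) ≠ (x₁ + 1) ^ (q - 1) := fun h =>
    hb0 (by rw [← hx₁, pow_mul', pow_mul', h, sub_self])
  have hfrob₁ : ∀ x : K, (x + 1) ^ q = x ^ q + 1 := fun x => by rw [hfrob, one_pow]
  calc x₁ = ((x₁ + 1) ^ (q - 1) - 1) / (x₁ ^ (q - 1) - (x₁ + 1) ^ (q - 1)) :=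
        eq_div_of_add_one_pow_eq hq (hfrob₁ x₁) hne
    _ = ((x₂ + 1) ^ (q - 1) - 1) / (x₂ ^ (q - 1) - (x₂ + 1) ^ (q - 1)) := by rw [hy, hz]
    _ = x₂ := (eq_div_of_add_one_pow_eq hq (hfrob₁ x₂) (hy ▸ hz ▸ hne)).symm

theorem card_filter_add_one_pow_sub_pow_eq_le_two [DecidableEq K]
    (hcard : Fintype.card K = q ^ 2) (hfrob : ∀ u v : K, (u + v) ^ q = u ^ q + v ^ q) {k : ℕ}
    (hkq : k.Coprime (q + 1)) {b : K} (hb0 : b ≠ 0) (hb1 : b ≠ 1) (hbm : b ≠ -1) :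
    (univ.filter fun x : K => (x + 1) ^ (k * (q - 1)) - x ^ (k * (q - 1)) = b).card ≤ 2 := by
  set S := univ.filter fun x : K => (x + 1) ^ (k * (q - 1)) - x ^ (k * (q - 1)) = b
  set P : K[X] := C (b ^ q) * X ^ 2 + C (b ^ (q + 1)) * X + C b
  have hP : P.natDegree = 2 := natDegree_quadratic (pow_ne_zero q hb0)
  have hnorm : ∀ x : K, x ≠ 0 → (x ^ (k * (q - 1))) ^ (q + 1) = 1 := fun x hx => by
    rw [pow_mul', pow_right_comm, pow_sub_one_pow_add_one_eq_one hcard hx, one_pow]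
  have hroots : (S.image (· ^ (k * (q - 1)))).val ⊆ P.roots := by
    intro v hv
    obtain ⟨x, hx, rfl⟩ := mem_image.1 hv
    replace hx := (mem_filter.1 hx).2
    rw [mem_roots (ne_zero_of_natDegree_gt (hP ▸ two_pos)), IsRoot.def]
    have hx1 := add_one_ne_zero_of_add_one_pow_sub_pow_eq hb0 hb1 hbm hx
    simpa [P] using quadratic_eq_zero_of_pow_succ_eq_one (hfrob _ _)
      (hnorm x (ne_zero_of_add_one_pow_sub_pow_eq hb0 hb1 hx))
      (eq_add_of_sub_eq' hx ▸ hnorm (x + 1) hx1)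
  have hinj : Set.InjOn (· ^ (k * (q - 1))) (S : Set K) := fun x₁ hx₁ x₂ hx₂ =>
    injOn_pow_setOf_add_one_pow_sub_pow_eq hcard hfrob hkq hb0 hb1 hbm
      (mem_filter.1 hx₁).2 (mem_filter.1 hx₂).2
  calc S.card = (S.image (· ^ (k * (q - 1)))).card := (card_image_of_injOn hinj).symm
    _ ≤ P.natDegree := card_le_degree_of_subset_roots hroots
    _ = 2 := hP

end Field

theorem stmt_14_general (p m q k : ℕ) (hp : p.Prime) (hq : q = p ^ m)
    (hgcd : Nat.gcd k (q + 1) = 1)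
    (K : Type*) [Field K] [Fintype K] [DecidableEq K] (hcard : Fintype.card K = q ^ 2) :
    ∀ b : K, b ≠ 0 → b ≠ 1 → b ≠ -1 →
      (Finset.univ.filter
        (fun x : K => (x + 1) ^ (k * (q - 1)) - x ^ (k * (q - 1)) = b)).card ≤ 2 := by
  intro b hb0 hb1 hbm
  subst hq
  have : Fact p.Prime := ⟨hp⟩
  have : CharP K p := charP_of_card_eq_prime_pow (hcard.trans (pow_mul p m 2).symm)
  exact card_filter_add_one_pow_sub_pow_eq_le_two hcard (fun u v => add_pow_char_pow u v p m)
    hgcd hb0 hb1 hbm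

/-- Let `q = p^m` with `p` an odd prime, `k > 0` with `gcd(k, q+1) = 1`, `K` the field
with `q^2` elements and `F x = x^(k(q-1))`. Then `F` is locally-APN: for every
`b ∈ K \ {0, 1, -1}`, the equation `F(x+1) - F(x) = b` has at most `2` solutions. -/
theorem stmt_14 (p m q k : ℕ) (hp : p.Prime) (hodd : Odd p) (hm : 0 < m) (hq : q = p ^ m)
    (hk : 0 < k) (hgcd : Nat.gcd k (q + 1) = 1)
    (K : Type*) [Field K] [Fintype K] [DecidableEq K] (hcard : Fintype.card K = q ^ 2) :
    ∀ b : K, b ≠ 0 → b ≠ 1 → b ≠ -1 →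
      (Finset.univ.filter
        (fun x : K => (x + 1) ^ (k * (q - 1)) - x ^ (k * (q - 1)) = b)).card ≤ 2 :=
  stmt_14_general p m q k hp hq hgcd K hcard
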